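/- arXiv:2208.06871 — 5 statements merged into one kernel-verified Lean document; each statement's English description precedes it below -/
import Mathlib

section
/- Let H be a real Hilbert space, let T : H → H be L-Lipschitz continuous with L > 0, let {w_n} be any sequence in H, let δ_0, δ_1 > 0, r > 0, and let {c_n} be a sequence in [0, ∞) with c̄ := Σ_{n=1}^∞ c_n < ∞. Define the step sizes recursively by δ_{n+1} = min{ r‖w_n − w_{n+1}‖ / ‖T w_n − T w_{n+1}‖, δ_n + c_n } if T w_n ≠ T w_{n+1}, and δ_{n+1} = δ_n + c_n otherwise. Then the sequence {δ_n} converges to a limit δ̄ satisfying min{r/L, δ_1} ≤ δ̄ ≤ δ_1 + c̄. -/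
open Filter Topology
open scoped Classical

/-!
A real sequence whose increments are bounded by a summable nonnegative sequence `f` becomes
nonincreasing once the remaining budget `∑_{k ≥ n} f k` is added to it; if it is bounded below,
this corrected sequence converges, and so does the original one since the budget tends to `0`.
The adaptive step sizes satisfy `δ (n+1) ≤ δ n + c n`, and Lipschitz continuity of `T` keeps the
ratio `r‖w n - w (n+1)‖ / ‖T (w n) - T (w (n+1))‖` above `r / L`, so by induction every
`δ n` with `n ≥ 1` stays above `min (r / L) (δ 1)`.
-/

theorem Real.exists_tendsto_of_le_add_of_summable {a f : ℕ → ℝ} {m : ℝ}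
    (hf : ∀ n, 0 ≤ f n) (hfs : Summable f) (hstep : ∀ n, a (n + 1) ≤ a n + f n)
    (hlow : ∀ n, m ≤ a n) :
    ∃ ℓ, Tendsto a atTop (𝓝 ℓ) ∧ m ≤ ℓ ∧ ℓ ≤ a 0 + ∑' n, f n := by
  set tail : ℕ → ℝ := fun n => ∑' k, f (k + n)
  set φ : ℕ → ℝ := fun n => a n + tail n
  have htail_succ (n : ℕ) : tail n = f n + tail (n + 1) := by
    simpa only [zero_add, add_assoc, add_comm 1 n] using
      ((summable_nat_add_iff n).2 hfs).tsum_eq_zero_add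
  have hφ_anti : Antitone φ := antitone_nat_of_succ_le fun n => by
    simp only [φ, htail_succ n]
    linarith [hstep n]
  have hφ_low (n : ℕ) : m ≤ φ n :=
    le_add_of_le_of_nonneg (hlow n) (tsum_nonneg fun k => hf (k + n))
  have hφ_bdd : BddBelow (Set.range φ) := ⟨m, by rintro _ ⟨n, rfl⟩; exact hφ_low n⟩
  have hφ_tendsto : Tendsto φ atTop (𝓝 (⨅ n, φ n)) := tendsto_atTop_ciInf hφ_anti hφ_bdd
  refine ⟨⨅ n, φ n, ?_, ge_of_tendsto' hφ_tendsto hφ_low, ?_⟩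
  · simpa [φ, tail] using hφ_tendsto.sub (tendsto_sum_nat_add f)
  · simpa [φ, tail] using ciInf_le hφ_bdd 0

theorem div_le_mul_div_of_le_mul {r L u v : ℝ} (hr : 0 ≤ r) (hL : 0 < L) (hu : 0 < u)
    (huv : u ≤ L * v) : r / L ≤ r * v / u := by
  rw [div_le_div_iff₀ hL hu]
  nlinarith

section AdaptiveStep

variable {H : Type*} [NormedAddCommGroup H]

def AdaptiveStepRule (T : H → H) (w : ℕ → H) (δ c : ℕ → ℝ) (r : ℝ) : Prop :=
  ∀ n, 1 ≤ n → δ (n + 1) =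
    if T (w n) ≠ T (w (n + 1)) then
      min (r * ‖w n - w (n + 1)‖ / ‖T (w n) - T (w (n + 1))‖) (δ n + c n)
    else δ n + c n

variable {T : H → H} {w : ℕ → H} {δ c : ℕ → ℝ} {r : ℝ}

theorem AdaptiveStepRule.le_add (hrule : AdaptiveStepRule T w δ c r) {n : ℕ} (hn : 1 ≤ n) :
    δ (n + 1) ≤ δ n + c n := by
  rw [hrule n hn]
  split_ifs
  exacts [min_le_right _ _, le_rfl]

theorem AdaptiveStepRule.min_div_le {L : ℝ} (hL : 0 < L)
    (hTlip : ∀ a b : H, ‖T a - T b‖ ≤ L * ‖a - b‖) (hr : 0 < r) (hc : ∀ n, 0 ≤ c n)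
    (hrule : AdaptiveStepRule T w δ c r) {n : ℕ} (hn : 1 ≤ n) :
    min (r / L) (δ 1) ≤ δ n := by
  induction n, hn using Nat.le_induction with
  | base => exact min_le_right _ _
  | succ n hn ih =>
    rw [hrule n hn]
    split_ifs with hTne
    · refine le_min ((min_le_left _ _).trans ?_) (by linarith [hc n])
      exact div_le_mul_div_of_le_mul hr.le hL (norm_pos_iff.2 (sub_ne_zero.2 hTne)) (hTlip _ _)
    · linarith [hc n]

end AdaptiveStep

theorem stmt3_general {H : Type*} [NormedAddCommGroup H]
    (T : H → H) (L : ℝ) (hL : 0 < L)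
    (hTlip : ∀ a b : H, ‖T a - T b‖ ≤ L * ‖a - b‖)
    (w : ℕ → H) (δ c : ℕ → ℝ) (r : ℝ) (hr : 0 < r)
    (hc : ∀ n, 0 ≤ c n) (hcsum : Summable fun n => c (n + 1))
    (hrule : ∀ n, 1 ≤ n → δ (n + 1) =
      if T (w n) ≠ T (w (n + 1)) then
        min (r * ‖w n - w (n + 1)‖ / ‖T (w n) - T (w (n + 1))‖) (δ n + c n)
      else δ n + c n) :
    ∃ δbar : ℝ, Tendsto δ atTop (𝓝 δbar) ∧
      min (r / L) (δ 1) ≤ δbar ∧ δbar ≤ δ 1 + ∑' n, c (n + 1) := by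
  have hrule' : AdaptiveStepRule T w δ c r := hrule
  obtain ⟨δbar, hlim, hbounds⟩ := Real.exists_tendsto_of_le_add_of_summable
    (a := fun n => δ (n + 1)) (fun n => hc (n + 1)) hcsum
    (fun n => hrule'.le_add (Nat.le_add_left 1 n))
    (fun n => hrule'.min_div_le hL hTlip hr hc (Nat.le_add_left 1 n))
  exact ⟨δbar, (tendsto_add_atTop_iff_nat 1).1 hlim, hbounds⟩

/-- The adaptive step sizes
`δ (n+1) = min (r‖w n − w (n+1)‖ / ‖T (w n) − T (w (n+1))‖) (δ n + c n)` (when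
`T (w n) ≠ T (w (n+1))`, and `δ n + c n` otherwise) converge to some
`δ̄ ∈ [min (r/L) (δ 1), δ 1 + ∑ c_n]`, where `T` is `L`-Lipschitz. -/
theorem stmt3 {H : Type*} [NormedAddCommGroup H] [InnerProductSpace ℝ H] [CompleteSpace H]
    (T : H → H) (L : ℝ) (hL : 0 < L)
    (hTlip : ∀ a b : H, ‖T a - T b‖ ≤ L * ‖a - b‖)
    (w : ℕ → H) (δ c : ℕ → ℝ) (r : ℝ) (hr : 0 < r)
    (hδ0 : 0 < δ 0) (hδ1 : 0 < δ 1)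
    (hc : ∀ n, 0 ≤ c n) (hcsum : Summable fun n => c (n + 1))
    (hrule : ∀ n, 1 ≤ n → δ (n + 1) =
      if T (w n) ≠ T (w (n + 1)) then
        min (r * ‖w n - w (n + 1)‖ / ‖T (w n) - T (w (n + 1))‖) (δ n + c n)
      else δ n + c n) :
    ∃ δbar : ℝ, Tendsto δ atTop (𝓝 δbar) ∧
      min (r / L) (δ 1) ≤ δbar ∧ δbar ≤ δ 1 + ∑' n, c (n + 1) :=
  stmt3_general T L hL hTlip w δ c r hr hc hcsum hrule
end

section
/- Under Assumption A, let β ∈ (0, 1/4), r ∈ (β, (1−2β)/2), let {σ_n} be a sequence in (0,1) with lim_{n→∞} σ_n = 0, let {c_n} be a sequence in [0, ∞) with Σ_{n=1}^∞ c_n < ∞, and let δ_0, δ_1 > 0. Given arbitrary v̂, w_0, w_1 ∈ H, let {w_n} satisfy, for all n ≥ 1, the resolvent inclusion σ_n v̂ + (1−σ_n) w_n − δ_n T w_n − δ_{n−1}(1−σ_n)(T w_n − T w_{n−1}) − w_{n+1} ∈ δ_n • S(w_{n+1}), where the step sizes δ_n obey the adaptive rule: δ_{n+1} = min{ r‖w_n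 − w_{n+1}‖ / ‖T w_n − T w_{n+1}‖, δ_n + c_n } if T w_n ≠ T w_{n+1}, and δ_{n+1} = δ_n + c_n otherwise. Then the sequence {w_n} is bounded. -/
open Filter Topology
open scoped RealInnerProductSpace Pointwise Classical

/-
Fix a zero `z` of `T + S` and put `R = (1 + ε) r`. Monotonicity of `T + S` at each resolvent
step, with the anchor and reflection terms absorbed by Young's inequality, shows that
`Q n = ‖w (n+1) - z‖² + 2 δ_n ⟪T w (n+1) - T w n, z - w (n+1)⟫ + (R + ε) ‖w n - w (n+1)‖²`
satisfies `Q (n+1) ≤ (1 - κ σ_(n+1)) Q n + σ_(n+1) K`, with `κ = (1 - 2ε - R) / 2` and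
`K = (1 + 2ε) ‖v̂ - z‖²`, whenever `σ_(n+1) ≤ ε²` and `δ_n ≤ (1 + ε) δ_(n+1)`. Both hold
eventually: `σ → 0`, and the step sizes converge to a positive limit since they are bounded
below by `min δ_1 (r / L)` and grow by at most the summable `c_n`.
Hence `Q` stays below `max (Q N) (K / κ)`, and `Q n ≥ ‖w (n+1) - z‖² / 2` because `R ≤ 1 / 2`.
-/

theorem exists_tendsto_of_le_add_of_summable {u c : ℕ → ℝ} (hu : BddBelow (Set.range u))
    (hc0 : ∀ n, 0 ≤ c n) (hc : Summable c) (h : ∀ n, u (n + 1) ≤ u n + c n) :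
    ∃ l, Tendsto u atTop (𝓝 l) := by
  set v : ℕ → ℝ := fun n => u n - ∑ i ∈ Finset.range n, c i with hv
  have hanti : Antitone v := antitone_nat_of_succ_le fun n => by
    simp only [hv, Finset.sum_range_succ]
    linarith [h n]
  have hbdd : BddBelow (Set.range v) := by
    obtain ⟨m, hm⟩ := hu
    refine ⟨m - ∑' i, c i, Set.forall_mem_range.2 fun n => ?_⟩
    have := hc.sum_le_tsum (Finset.range n) fun i _ => hc0 i
    linarith [hm ⟨n, rfl⟩]
  exact ⟨_, ((tendsto_atTop_ciInf hanti hbdd).add hc.hasSum.tendsto_sum_nat).congr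
    fun n => sub_add_cancel _ _⟩

theorem eventually_le_one_add_mul_succ {u : ℕ → ℝ} {l ε : ℝ} (hl : 0 < l) (hε : 0 < ε)
    (hu : Tendsto u atTop (𝓝 l)) : ∀ᶠ n in atTop, u n ≤ (1 + ε) * u (n + 1) := by
  have h : Tendsto (fun n => u n - (1 + ε) * u (n + 1)) atTop (𝓝 (l - (1 + ε) * l)) :=
    hu.sub ((hu.comp (tendsto_add_atTop_nat 1)).const_mul _)
  filter_upwards [h.eventually_le_const (by nlinarith : l - (1 + ε) * l < 0)] with n hn
  linarith

theorem exists_forall_le_of_eventually_le {u : ℕ → ℝ} {C : ℝ} (h : ∀ᶠ n in atTop, u n ≤ C) :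
    ∃ C', ∀ n, u n ≤ C' := by
  obtain ⟨C', hC'⟩ := (isBoundedUnder_of_eventually_le h).bddAbove_range
  exact ⟨C', fun n => hC' ⟨n, rfl⟩⟩

theorem le_max_of_le_one_sub_mul_add {Q t : ℕ → ℝ} {κ K : ℝ} {N : ℕ} (hκ : 0 < κ)
    (ht : ∀ n ≥ N, 0 ≤ t n ∧ t n * κ ≤ 1)
    (h : ∀ n ≥ N, Q (n + 1) ≤ (1 - t n * κ) * Q n + t n * K) :
    ∀ n ≥ N, Q n ≤ max (Q N) (K / κ) := by
  intro n hn
  induction n, hn using Nat.le_induction with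
  | base => exact le_max_left _ _
  | succ n hn ih =>
    set G := max (Q N) (K / κ)
    have hK : K ≤ κ * G := (div_le_iff₀' hκ).1 (le_max_right _ _)
    obtain ⟨ht0, ht1⟩ := ht n hn
    calc Q (n + 1) ≤ (1 - t n * κ) * Q n + t n * K := h n hn
      _ ≤ (1 - t n * κ) * G + t n * (κ * G) := by gcongr
      _ = G := by ring

section StepSize

variable {H : Type*} [NormedAddCommGroup H]

noncomputable def adaptiveStepSize (T : H → H) (r δ c : ℝ) (a b : H) : ℝ :=
  if T a ≠ T b then min (r * ‖a - b‖ / ‖T a - T b‖) (δ + c) else δ + c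

variable {T : H → H} {r δ c : ℝ} {a b : H}

theorem adaptiveStepSize_le_add : adaptiveStepSize T r δ c a b ≤ δ + c := by
  unfold adaptiveStepSize
  split_ifs
  exacts [min_le_right _ _, le_rfl]

theorem adaptiveStepSize_mul_norm_le (hr : 0 ≤ r) :
    adaptiveStepSize T r δ c a b * ‖T a - T b‖ ≤ r * ‖a - b‖ := by
  unfold adaptiveStepSize
  split_ifs with h
  · have hΔ : 0 < ‖T a - T b‖ := norm_pos_iff.2 (sub_ne_zero.2 h)
    calc min (r * ‖a - b‖ / ‖T a - T b‖) (δ + c) * ‖T a - T b‖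
        ≤ r * ‖a - b‖ / ‖T a - T b‖ * ‖T a - T b‖ := by gcongr; exact min_le_left _ _
      _ = r * ‖a - b‖ := div_mul_cancel₀ _ hΔ.ne'
  · rw [not_not.1 h, sub_self, norm_zero, mul_zero]
    positivity

theorem min_le_adaptiveStepSize {L : ℝ} (hL : 0 < L) (hT : ‖T a - T b‖ ≤ L * ‖a - b‖)
    (hr : 0 ≤ r) (hc : 0 ≤ c) : min δ (r / L) ≤ adaptiveStepSize T r δ c a b := by
  unfold adaptiveStepSize
  split_ifs with h
  · have hΔ : 0 < ‖T a - T b‖ := norm_pos_iff.2 (sub_ne_zero.2 h)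
    refine le_min ((min_le_right _ _).trans ?_) ((min_le_left _ _).trans (by linarith))
    rw [div_le_div_iff₀ hL hΔ]
    nlinarith
  · exact (min_le_left _ _).trans (by linarith)

theorem eventually_mul_norm_le_of_adaptiveStepSize {L ε : ℝ} {c δ : ℕ → ℝ} {w : ℕ → H}
    (hL : 0 < L) (hT : ∀ a b, ‖T a - T b‖ ≤ L * ‖a - b‖) (hr : 0 < r) (hε : 0 < ε)
    (hc : ∀ n, 0 ≤ c n) (hcsum : Summable fun n => c (n + 1)) (hδ1 : 0 < δ 1)
    (hrule : ∀ n, 1 ≤ n → δ (n + 1) = adaptiveStepSize T r (δ n) (c n) (w n) (w (n + 1))) :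
    ∀ᶠ n in atTop, 0 < δ n ∧
      δ n * ‖T (w (n + 1)) - T (w n)‖ ≤ (1 + ε) * r * ‖w n - w (n + 1)‖ := by
  have hlow : ∀ n, min (δ 1) (r / L) ≤ δ (n + 1) := by
    intro n
    induction n with
    | zero => exact min_le_left _ _
    | succ n ih =>
      rw [hrule _ n.succ_pos]
      exact (le_min ih (min_le_right _ _)).trans
        (min_le_adaptiveStepSize hL (hT _ _) hr.le (hc _))
  obtain ⟨l, hl⟩ := exists_tendsto_of_le_add_of_summable ⟨_, Set.forall_mem_range.2 hlow⟩
    (fun n => hc _) hcsum fun n => (hrule _ n.succ_pos).trans_le adaptiveStepSize_le_add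
  have hl0 : 0 < l := (lt_min hδ1 (div_pos hr hL)).trans_le (ge_of_tendsto' hl hlow)
  have hδ : Tendsto δ atTop (𝓝 l) := (tendsto_add_atTop_iff_nat 1).1 hl
  filter_upwards [hδ.eventually_const_lt hl0, eventually_le_one_add_mul_succ hl0 hε hδ,
    eventually_ge_atTop 1] with n hpos hratio hn
  refine ⟨hpos, ?_⟩
  calc δ n * ‖T (w (n + 1)) - T (w n)‖
      ≤ (1 + ε) * δ (n + 1) * ‖T (w n) - T (w (n + 1))‖ := by rw [norm_sub_rev]; gcongr
    _ ≤ (1 + ε) * r * ‖w n - w (n + 1)‖ := by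
      rw [mul_assoc, mul_assoc, hrule n hn]
      exact mul_le_mul_of_nonneg_left (adaptiveStepSize_mul_norm_le hr.le) (by positivity)

end StepSize

-- `a, a'` are the distances of two consecutive iterates to `z`, `d, d'` the last two step
-- lengths, `s, s'` the reflected inner-product terms and `b` the distance to the anchor.
theorem lyapunov_real_step {ε R σ K a a' b d d' q s s' : ℝ} (hε : 0 < ε) (hR : 0 ≤ R)
    (hRε : 2 * R + 2 * ε ≤ 1) (hσ : 0 ≤ σ) (hσε : σ ≤ ε ^ 2) (hd : 0 ≤ d) (hq : q ≤ R * d')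
    (hs : |s| ≤ R * (d' ^ 2 + a ^ 2)) (hb : b ^ 2 ≤ 2 * K + 2 * a ^ 2)
    (hmain : a' ^ 2 + s' ≤ σ * K + (1 - σ) * a ^ 2 - d ^ 2 + 2 * σ * b * d + (1 - σ) * s
      + 2 * q * d) :
    a' ^ 2 + s' + (R + ε) * d ^ 2
      ≤ (1 - σ * ((1 - 2 * ε - R) / 2)) * (a ^ 2 + s + (R + ε) * d' ^ 2)
        + σ * ((1 + 2 * ε) * K) := by
  have hκ : 0 ≤ (1 - 2 * ε - R) / 2 := by linarith
  -- Young's inequality with weight `ε`, using `σ² ≤ ε² σ`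
  have hanchor : 2 * σ * b * d ≤ ε * d ^ 2 + ε * σ * (2 * K + 2 * a ^ 2) := by
    have : 0 ≤ ε * (ε * d ^ 2 + ε * σ * b ^ 2 - 2 * σ * b * d) := by
      nlinarith [sq_nonneg (ε * d - σ * b), mul_nonneg (mul_nonneg hσ (sq_nonneg b))
        (sub_nonneg.2 hσε)]
    have : ε * σ * b ^ 2 ≤ ε * σ * (2 * K + 2 * a ^ 2) := by gcongr
    nlinarith
  have hreflect : 2 * q * d ≤ R * (d' ^ 2 + d ^ 2) := by
    nlinarith [mul_le_mul_of_nonneg_left hq hd, mul_nonneg hR (sq_nonneg (d - d'))]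
  have hs_lower : -(σ * (1 + 2 * ε + R) / 2 * (R * (d' ^ 2 + a ^ 2)))
      ≤ σ * (1 + 2 * ε + R) / 2 * s := by
    rw [← mul_neg]
    exact mul_le_mul_of_nonneg_left (abs_le.1 hs).1 (by positivity)
  have hσR : σ * (R + ε * ((1 - 2 * ε - R) / 2)) ≤ ε := by
    have : R + ε * ((1 - 2 * ε - R) / 2) ≤ 1 := by nlinarith
    nlinarith
  linarith [mul_nonneg (mul_nonneg hσ hκ) (mul_nonneg (by linarith : 0 ≤ 1 + R) (sq_nonneg a)),
    mul_nonneg (sub_nonneg.2 hσR) (sq_nonneg d'),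
    mul_nonneg (by linarith : 0 ≤ 1 - 2 * R - 2 * ε) (sq_nonneg d)]

section Hilbert

variable {H : Type*} [NormedAddCommGroup H] [InnerProductSpace ℝ H]
  {T : H → H} {S : H → Set H}

theorem sq_norm_sub_two_mul_le_sq_norm_add (a b : H) :
    ‖a‖ ^ 2 - 2 * ‖b‖ * ‖a‖ ≤ ‖a + b‖ ^ 2 := by
  rw [norm_add_sq_real]
  nlinarith [neg_le_of_abs_le (abs_real_inner_le_norm a b), sq_nonneg ‖b‖]

theorem abs_two_mul_inner_le {δ R : ℝ} {u v x : H} (hδ : 0 ≤ δ) (hR : 0 ≤ R)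
    (h : δ * ‖u‖ ≤ R * ‖x‖) : |2 * δ * ⟪u, v⟫| ≤ R * (‖x‖ ^ 2 + ‖v‖ ^ 2) :=
  calc |2 * δ * ⟪u, v⟫| = 2 * δ * |⟪u, v⟫| := by rw [abs_mul, abs_of_nonneg (by positivity)]
    _ ≤ 2 * δ * (‖u‖ * ‖v‖) := by gcongr; exact abs_real_inner_le_norm u v
    _ ≤ 2 * (R * ‖x‖) * ‖v‖ := by rw [← mul_assoc, mul_assoc 2]; gcongr
    _ ≤ R * (‖x‖ ^ 2 + ‖v‖ ^ 2) := by nlinarith [mul_nonneg hR (sq_nonneg (‖x‖ - ‖v‖))]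

theorem inner_resolvent_nonneg
    (hSmono : ∀ ⦃a b a' b' : H⦄, a' ∈ S a → b' ∈ S b → 0 ≤ ⟪a' - b', a - b⟫)
    (hTmono : ∀ a b : H, 0 ≤ ⟪T a - T b, a - b⟫) {z g p : H} {δ : ℝ} (hz : -T z ∈ S z)
    (hδ : 0 ≤ δ) (h : g - p ∈ δ • S p) : 0 ≤ ⟪g - p + δ • T p, p - z⟫ := by
  obtain ⟨x, hx, hxe⟩ := Set.mem_smul_set.1 h
  rw [← hxe, ← smul_add, real_inner_smul_left,
    show x + T p = (x - -T z) + (T p - T z) by abel, inner_add_left]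
  exact mul_nonneg hδ (add_nonneg (hSmono hx hz) (hTmono p z))

theorem norm_sq_add_inner_le_of_mem_resolvent
    (hSmono : ∀ ⦃a b a' b' : H⦄, a' ∈ S a → b' ∈ S b → 0 ≤ ⟪a' - b', a - b⟫)
    (hTmono : ∀ a b : H, 0 ≤ ⟪T a - T b, a - b⟫) {z v wp wc wn : H} {σ δp δc : ℝ}
    (hz : -T z ∈ S z) (hσ : σ ∈ Set.Ioo 0 1) (hδp : 0 ≤ δp) (hδc : 0 ≤ δc)
    (hit : σ • v + (1 - σ) • wc - δc • T wc - (δp * (1 - σ)) • (T wc - T wp) - wn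
      ∈ δc • S wn) :
    ‖wn - z‖ ^ 2 + 2 * δc * ⟪T wn - T wc, z - wn⟫
      ≤ σ * ‖v - z‖ ^ 2 + (1 - σ) * ‖wc - z‖ ^ 2 - ‖wc - wn‖ ^ 2
        + 2 * σ * ‖v - wc‖ * ‖wc - wn‖ + (1 - σ) * (2 * δp * ⟪T wc - T wp, z - wc⟫)
        + 2 * (δp * ‖T wc - T wp‖) * ‖wc - wn‖ := by
  obtain ⟨hσ0, hσ1⟩ := hσ
  set y := σ • v + (1 - σ) • wc
  set ΔT := T wc - T wp
  have hmono := inner_resolvent_nonneg hSmono hTmono hz hδc hit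
  rw [show y - δc • T wc - (δp * (1 - σ)) • ΔT - wn + δc • T wn
      = (y - wn) + δc • (T wn - T wc) - (δp * (1 - σ)) • ΔT by module,
    inner_sub_left, inner_add_left, real_inner_smul_left, real_inner_smul_left] at hmono
  have hflip : ⟪T wn - T wc, wn - z⟫ = -⟪T wn - T wc, z - wn⟫ := by
    rw [← inner_neg_right, neg_sub]
  have hsplit : ⟪ΔT, wn - z⟫ = ⟪ΔT, wn - wc⟫ - ⟪ΔT, z - wc⟫ := by
    rw [← inner_sub_right, sub_sub_sub_cancel_right]
  have hcross : -(‖ΔT‖ * ‖wc - wn‖) ≤ ⟪ΔT, wn - wc⟫ := by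
    rw [norm_sub_rev wc wn]; exact neg_le_of_abs_le (abs_real_inner_le_norm _ _)
  have hpolar : 2 * ⟪y - wn, wn - z⟫ = ‖y - z‖ ^ 2 - ‖wn - z‖ ^ 2 - ‖y - wn‖ ^ 2 := by
    have := norm_add_sq_real (y - wn) (wn - z)
    rw [sub_add_sub_cancel] at this
    linarith
  have hconvex : ‖y - z‖ ^ 2 ≤ σ * ‖v - z‖ ^ 2 + (1 - σ) * ‖wc - z‖ ^ 2 := by
    have := (convexOn_univ_norm.pow (fun _ _ => norm_nonneg _) 2).2 (Set.mem_univ (v - z))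
      (Set.mem_univ (wc - z)) hσ0.le (sub_nonneg.2 hσ1.le) (add_sub_cancel _ _)
    rw [show y - z = σ • (v - z) + (1 - σ) • (wc - z) by simp only [y]; module]
    simpa only [Pi.pow_apply, smul_eq_mul] using this
  have hanchor : ‖wc - wn‖ ^ 2 - 2 * (σ * ‖v - wc‖) * ‖wc - wn‖ ≤ ‖y - wn‖ ^ 2 := by
    have := sq_norm_sub_two_mul_le_sq_norm_add (wc - wn) (σ • (v - wc))
    rwa [norm_smul, Real.norm_of_nonneg hσ0.le,
      show wc - wn + σ • (v - wc) = y - wn by simp only [y]; module] at this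
  have hδpσ : 0 ≤ δp * (1 - σ) := mul_nonneg hδp (sub_nonneg.2 hσ1.le)
  nlinarith [mul_le_mul_of_nonneg_left hcross hδpσ,
    mul_nonneg (mul_nonneg hδp hσ0.le) (mul_nonneg (norm_nonneg ΔT) (norm_nonneg (wc - wn)))]

noncomputable def lyapunov (T : H → H) (z : H) (θ δ : ℝ) (wp wc : H) : ℝ :=
  ‖wc - z‖ ^ 2 + 2 * δ * ⟪T wc - T wp, z - wc⟫ + θ * ‖wp - wc‖ ^ 2

theorem sq_norm_sub_le_two_mul_lyapunov {z wp wc : H} {ε R δ : ℝ} (hε : 0 ≤ ε) (hR : 0 ≤ R)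
    (hR2 : R ≤ 1 / 2) (hδ : 0 ≤ δ) (hq : δ * ‖T wc - T wp‖ ≤ R * ‖wp - wc‖) :
    ‖wc - z‖ ^ 2 ≤ 2 * lyapunov T z (R + ε) δ wp wc := by
  have hs := abs_le.1 (abs_two_mul_inner_le (v := z - wc) hδ hR hq)
  rw [norm_sub_rev z wc] at hs
  unfold lyapunov
  nlinarith [mul_nonneg hε (sq_nonneg ‖wp - wc‖),
    mul_nonneg (sub_nonneg.2 hR2) (sq_nonneg ‖wc - z‖)]

theorem lyapunov_step
    (hSmono : ∀ ⦃a b a' b' : H⦄, a' ∈ S a → b' ∈ S b → 0 ≤ ⟪a' - b', a - b⟫)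
    (hTmono : ∀ a b : H, 0 ≤ ⟪T a - T b, a - b⟫) {z v wp wc wn : H} {ε R σ δp δc : ℝ}
    (hz : -T z ∈ S z) (hε : 0 < ε) (hR : 0 ≤ R) (hRε : 2 * R + 2 * ε ≤ 1)
    (hσ : σ ∈ Set.Ioo 0 1) (hσε : σ ≤ ε ^ 2) (hδp : 0 ≤ δp) (hδc : 0 ≤ δc)
    (hq : δp * ‖T wc - T wp‖ ≤ R * ‖wp - wc‖)
    (hit : σ • v + (1 - σ) • wc - δc • T wc - (δp * (1 - σ)) • (T wc - T wp) - wn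
      ∈ δc • S wn) :
    lyapunov T z (R + ε) δc wc wn
      ≤ (1 - σ * ((1 - 2 * ε - R) / 2)) * lyapunov T z (R + ε) δp wp wc
        + σ * ((1 + 2 * ε) * ‖v - z‖ ^ 2) := by
  have hs := abs_two_mul_inner_le (v := z - wc) hδp hR hq
  rw [norm_sub_rev z wc] at hs
  have hb : ‖v - wc‖ ^ 2 ≤ 2 * ‖v - z‖ ^ 2 + 2 * ‖wc - z‖ ^ 2 := by
    have := norm_sub_le_norm_sub_add_norm_sub v z wc
    rw [norm_sub_rev z wc] at this
    nlinarith [sq_nonneg (‖v - z‖ - ‖wc - z‖), norm_nonneg (v - wc)]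
  exact lyapunov_real_step hε hR hRε hσ.1.le hσε (norm_nonneg _) hq hs hb
    (norm_sq_add_inner_le_of_mem_resolvent hSmono hTmono hz hσ hδp hδc hit)

end Hilbert

theorem stmt4_general {H : Type*} [NormedAddCommGroup H] [InnerProductSpace ℝ H]
    (T : H → H) (L : ℝ) (hL : 0 < L)
    (hTmono : ∀ a b : H, 0 ≤ ⟪T a - T b, a - b⟫)
    (hTlip : ∀ a b : H, ‖T a - T b‖ ≤ L * ‖a - b‖)
    (S : H → Set H)
    (hSmono : ∀ ⦃a b a' b' : H⦄, a' ∈ S a → b' ∈ S b → 0 ≤ ⟪a' - b', a - b⟫)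
    (hZ : {z : H | -T z ∈ S z}.Nonempty)
    (β r : ℝ) (hβ : β ∈ Set.Ioo (0 : ℝ) (1 / 4)) (hrr : r ∈ Set.Ioo β ((1 - 2 * β) / 2))
    (σ : ℕ → ℝ) (hσ : ∀ n, σ n ∈ Set.Ioo (0 : ℝ) 1) (hσ0 : Tendsto σ atTop (𝓝 0))
    (c : ℕ → ℝ) (hc : ∀ n, 0 ≤ c n) (hcsum : Summable fun n => c (n + 1))
    (δ : ℕ → ℝ) (hδ1 : 0 < δ 1)
    (vhat : H) (w : ℕ → H)
    (hrule : ∀ n, 1 ≤ n → δ (n + 1) =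
      if T (w n) ≠ T (w (n + 1)) then
        min (r * ‖w n - w (n + 1)‖ / ‖T (w n) - T (w (n + 1))‖) (δ n + c n)
      else δ n + c n)
    (hiter : ∀ n, 1 ≤ n →
      σ n • vhat + (1 - σ n) • w n - δ n • T (w n)
          - (δ (n - 1) * (1 - σ n)) • (T (w n) - T (w (n - 1))) - w (n + 1)
        ∈ δ n • S (w (n + 1))) :
    ∃ C : ℝ, ∀ n, ‖w n‖ ≤ C := by
  obtain ⟨z, hz⟩ := hZ
  obtain ⟨hβ0, hβ⟩ := hβ
  obtain ⟨hβr, hr⟩ := hrr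
  have hr0 : 0 < r := hβ0.trans hβr
  set ε := β / 4 with hεdef
  set R := (1 + ε) * r with hRdef
  have hε : 0 < ε := by positivity
  have hR : 0 < R := mul_pos (by linarith) hr0
  have hRε : 2 * R + 2 * ε ≤ 1 := by nlinarith
  have hκ : 0 < (1 - 2 * ε - R) / 2 := by linarith
  obtain ⟨N, hN⟩ := eventually_atTop.1 ((eventually_mul_norm_le_of_adaptiveStepSize hL hTlip
    hr0 hε hc hcsum hδ1 hrule).and (hσ0.eventually_le_const (pow_pos hε 2)))
  set Q := fun n => lyapunov T z (R + ε) (δ n) (w n) (w (n + 1))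
  have hQ : ∀ n ≥ N, Q (n + 1) ≤ (1 - σ (n + 1) * ((1 - 2 * ε - R) / 2)) * Q n
      + σ (n + 1) * ((1 + 2 * ε) * ‖vhat - z‖ ^ 2) := fun n hn =>
    lyapunov_step hSmono hTmono hz hε hR.le hRε (hσ _) (hN _ (by omega)).2 (hN n hn).1.1.le
      (hN _ (by omega)).1.1.le (hN n hn).1.2 (hiter _ (by omega))
  have hQle := le_max_of_le_one_sub_mul_add hκ (fun n _ =>
    ⟨(hσ _).1.le, (mul_le_of_le_one_left hκ.le (hσ _).2.le).trans (by linarith)⟩) hQ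
  set G := max (Q N) ((1 + 2 * ε) * ‖vhat - z‖ ^ 2 / ((1 - 2 * ε - R) / 2))
  have hfar : ∀ n ≥ N, ‖w (n + 1) - z‖ ≤ √(2 * G) := fun n hn =>
    Real.le_sqrt_of_sq_le <| (sq_norm_sub_le_two_mul_lyapunov hε.le hR.le (by linarith)
      (hN n hn).1.1.le (hN n hn).1.2).trans (by linarith [hQle n hn])
  refine exists_forall_le_of_eventually_le (C := √(2 * G) + ‖z‖) ?_
  filter_upwards [eventually_ge_atTop (N + 1)] with m hm
  obtain ⟨n, rfl⟩ : ∃ n, m = n + 1 := ⟨m - 1, by omega⟩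
  exact (norm_le_norm_sub_add _ z).trans (add_le_add_left (hfar n (by omega)) _)

/-- Boundedness of the forward-reflected-anchored-backward splitting method
(Algorithm 3.2) under Assumption A with the adaptive step sizes. -/
theorem stmt4 {H : Type*} [NormedAddCommGroup H] [InnerProductSpace ℝ H] [CompleteSpace H]
    (T : H → H) (L : ℝ) (hL : 0 < L)
    (hTmono : ∀ a b : H, 0 ≤ ⟪T a - T b, a - b⟫)
    (hTlip : ∀ a b : H, ‖T a - T b‖ ≤ L * ‖a - b‖)
    (S : H → Set H)
    (hSmono : ∀ ⦃a b a' b' : H⦄, a' ∈ S a → b' ∈ S b → 0 ≤ ⟪a' - b', a - b⟫)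
    (hSmax : ∀ a a' : H, (∀ b b', b' ∈ S b → 0 ≤ ⟪a' - b', a - b⟫) → a' ∈ S a)
    (hZ : {z : H | -T z ∈ S z}.Nonempty)
    (β r : ℝ) (hβ : β ∈ Set.Ioo (0 : ℝ) (1 / 4)) (hrr : r ∈ Set.Ioo β ((1 - 2 * β) / 2))
    (σ : ℕ → ℝ) (hσ : ∀ n, σ n ∈ Set.Ioo (0 : ℝ) 1) (hσ0 : Tendsto σ atTop (𝓝 0))
    (c : ℕ → ℝ) (hc : ∀ n, 0 ≤ c n) (hcsum : Summable fun n => c (n + 1))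
    (δ : ℕ → ℝ) (hδ0 : 0 < δ 0) (hδ1 : 0 < δ 1)
    (vhat : H) (w : ℕ → H)
    (hrule : ∀ n, 1 ≤ n → δ (n + 1) =
      if T (w n) ≠ T (w (n + 1)) then
        min (r * ‖w n - w (n + 1)‖ / ‖T (w n) - T (w (n + 1))‖) (δ n + c n)
      else δ n + c n)
    (hiter : ∀ n, 1 ≤ n →
      σ n • vhat + (1 - σ n) • w n - δ n • T (w n)
          - (δ (n - 1) * (1 - σ n)) • (T (w n) - T (w (n - 1))) - w (n + 1)
        ∈ δ n • S (w (n + 1))) :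
    ∃ C : ℝ, ∀ n, ‖w n‖ ≤ C :=
  stmt4_general T L hL hTmono hTlip S hSmono hZ β r hβ hrr σ hσ hσ0 c hc hcsum δ hδ1 vhat w hrule
    hiter
end

section
/- Let H be a real Hilbert space, T : H → H, and let w_{n−1}, w_n, ŵ ∈ H, δ', δ > 0, β ∈ (0, 1/4) and ρ > 0 with (δ'/δ)·ρ ≤ 1/2 − β and δ·‖T w_n − T w_{n−1}‖ ≤ ρ·‖w_n − w_{n−1}‖. Then the quantity t_n := ‖w_n − ŵ‖² + 2δ'⟨T w_n − T w_{n−1}, ŵ − w_n⟩ + (1/2)‖w_n − w_{n−1}‖² satisfies t_n ≥ (1/2 + β)‖w_n − ŵ‖² + β‖w_n − w_{n−1}‖²; in particular t_n ≥ 0. -/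
open scoped RealInnerProductSpace

/-! Cauchy–Schwarz and the scaled Lipschitz bound give
`2δ'⟪T w - T wm, wsol - w⟫ ≥ -2κ ‖w - wm‖ ‖w - wsol‖` with `κ = 1/2 - β`, and the cross term is
absorbed by completing the square: the slack left in the claimed inequality is
`κ (‖w - wsol‖ - ‖w - wm‖)² ≥ 0`. -/

lemma mul_le_of_div_mul_le {δ' δ ρ κ p q : ℝ} (hδ' : 0 ≤ δ') (hδ : 0 < δ) (hq : 0 ≤ q)
    (h1 : δ' / δ * ρ ≤ κ) (h2 : δ * p ≤ ρ * q) : δ' * p ≤ κ * q :=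
  calc δ' * p = δ' / δ * (δ * p) := by field_simp
    _ ≤ δ' / δ * (ρ * q) := by gcongr
    _ = δ' / δ * ρ * q := by ring
    _ ≤ κ * q := by gcongr

lemma le_sq_add_inner_add_sq_of_mul_norm_le {H : Type*} [NormedAddCommGroup H]
    [InnerProductSpace ℝ H] {u v d : H} {c κ : ℝ} (hc : 0 ≤ c) (hκ : 0 ≤ κ)
    (hu : c * ‖u‖ ≤ κ * ‖v‖) :
    (1 - κ) * ‖d‖ ^ 2 + (1 / 2 - κ) * ‖v‖ ^ 2 ≤ ‖d‖ ^ 2 + 2 * c * ⟪u, d⟫ + 1 / 2 * ‖v‖ ^ 2 := by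
  have hcs : -(‖u‖ * ‖d‖) ≤ ⟪u, d⟫ := neg_le_of_abs_le (abs_real_inner_le_norm u d)
  have hcross : c * ‖u‖ * ‖d‖ ≤ κ * ‖v‖ * ‖d‖ := by gcongr
  nlinarith [mul_le_mul_of_nonneg_left hcs hc, mul_nonneg hκ (sq_nonneg (‖d‖ - ‖v‖))]

theorem stmt13_general {H : Type*} [NormedAddCommGroup H] [InnerProductSpace ℝ H]
    (T : H → H) (wm w wsol : H) (δ' δ β ρ : ℝ)
    (hδ' : 0 < δ') (hδ : 0 < δ) (hβ : β ∈ Set.Ioo (0 : ℝ) (1 / 4))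
    (h1 : δ' / δ * ρ ≤ 1 / 2 - β)
    (h2 : δ * ‖T w - T wm‖ ≤ ρ * ‖w - wm‖) :
    (1 / 2 + β) * ‖w - wsol‖ ^ 2 + β * ‖w - wm‖ ^ 2 ≤
        ‖w - wsol‖ ^ 2 + 2 * δ' * ⟪T w - T wm, wsol - w⟫ + (1 / 2) * ‖w - wm‖ ^ 2 ∧
      0 ≤ ‖w - wsol‖ ^ 2 + 2 * δ' * ⟪T w - T wm, wsol - w⟫ + (1 / 2) * ‖w - wm‖ ^ 2 := by
  obtain ⟨hβ0, hβ4⟩ := hβ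
  have hT := mul_le_of_div_mul_le hδ'.le hδ (norm_nonneg _) h1 h2
  have key := le_sq_add_inner_add_sq_of_mul_norm_le (d := wsol - w) hδ'.le (by linarith) hT
  rw [norm_sub_rev wsol w] at key
  have hlower : 0 ≤ (1 / 2 + β) * ‖w - wsol‖ ^ 2 + β * ‖w - wm‖ ^ 2 := by positivity
  constructor <;> linarith

/-- Lower bound on the Lyapunov-type quantity
`t_n = ‖w_n − ŵ‖² + 2δ'⟪T w_n − T w_{n−1}, ŵ − w_n⟫ + (1/2)‖w_n − w_{n−1}‖²`. -/
theorem stmt13 {H : Type*} [NormedAddCommGroup H] [InnerProductSpace ℝ H]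
    (T : H → H) (wm w wsol : H) (δ' δ β ρ : ℝ)
    (hδ' : 0 < δ') (hδ : 0 < δ) (hβ : β ∈ Set.Ioo (0 : ℝ) (1 / 4)) (hρ : 0 < ρ)
    (h1 : δ' / δ * ρ ≤ 1 / 2 - β)
    (h2 : δ * ‖T w - T wm‖ ≤ ρ * ‖w - wm‖) :
    (1 / 2 + β) * ‖w - wsol‖ ^ 2 + β * ‖w - wm‖ ^ 2 ≤
        ‖w - wsol‖ ^ 2 + 2 * δ' * ⟪T w - T wm, wsol - w⟫ + (1 / 2) * ‖w - wm‖ ^ 2 ∧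
      0 ≤ ‖w - wsol‖ ^ 2 + 2 * δ' * ⟪T w - T wm, wsol - w⟫ + (1 / 2) * ‖w - wm‖ ^ 2 :=
  stmt13_general T wm w wsol δ' δ β ρ hδ' hδ hβ h1 h2
end

section
/- Let H be a real Hilbert space, let T : H → H be monotone (⟨T a − T b, a − b⟩ ≥ 0 for all a, b ∈ H), let S : H → Set H be monotone (⟨â − b̂, a − b⟩ ≥ 0 whenever â ∈ S a and b̂ ∈ S b), and let ŵ ∈ H satisfy −T ŵ ∈ S ŵ. Let w_{n−1}, w_n, w_{n+1}, v̂ ∈ H, σ ∈ (0,1), δ', δ > 0, β ∈ (0, 1/4) and r > 0 be such that (δ'/δ)·r ≤ 1/2 − β, δ·‖T w_n − T w_{n−1}‖ ≤ r·‖w_n − w_{n−1}‖, and a_n − δ T w_n − δ'(1−σ)(T w_n − T w_{n−1}) − w_{n+1} ∈ δ • S(w_{n+1}), where a_n := σ v̂ + (1−σ) w_n. Then, with t_n := ‖w_n − ŵ‖² + 2δ'⟨T w_n − T w_{n−1}, ŵ − w_n⟩ + (1/2)‖w_n − w_{n−1}‖² and t_{n+1} := ‖w_{n+1} − ŵ‖²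 + 2δ⟨T w_{n+1} − T w_n, ŵ − w_{n+1}⟩ + (1/2)‖w_{n+1} − w_n‖², one has t_{n+1} ≤ (1−σ) t_n + σ‖v̂ − ŵ‖² − [1/2 − σ − (δ'/δ) r (1−σ)]‖w_{n+1} − w_n‖² − β(1−σ)‖w_n − w_{n−1}‖². -/
/-!
Let `s ∈ S wp` be the element with `δ • s` equal to the left side of the inclusion. Since `S + T`
is monotone and `0 ∈ (S + T) wsol`, one has `0 ≤ ⟪δ • (s + T wp), wp - wsol⟫`. Expanding this
inner product with the three-point identity `2⟪a - b, b - c⟫ = ‖a - c‖² - ‖a - b‖² - ‖b - c‖²`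
produces every term of the estimate except the reflected cross term
`-2 δ' (1 - σ) ⟪T w - T wm, wp - w⟫`, which the Lipschitz-type bound on `T` and Young's
inequality control by `(δ' / δ) r (1 - σ) (‖w - wm‖² + ‖wp - w‖²)`.
-/

open scoped RealInnerProductSpace Pointwise

section

variable {H : Type*} [NormedAddCommGroup H] [InnerProductSpace ℝ H]

lemma inner_add_sub_nonneg_of_neg_mem {T : H → H} {S : H → Set H}
    (hT : ∀ a b : H, 0 ≤ ⟪T a - T b, a - b⟫)
    (hS : ∀ ⦃a b a' b' : H⦄, a' ∈ S a → b' ∈ S b → 0 ≤ ⟪a' - b', a - b⟫)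
    {x z s : H} (hs : s ∈ S x) (hz : -T z ∈ S z) :
    0 ≤ ⟪s + T x, x - z⟫ := by
  have hsplit : s + T x = (s - -T z) + (T x - T z) := by abel
  rw [hsplit, inner_add_left]
  exact add_nonneg (hS hs hz) (hT x z)

lemma neg_two_mul_inner_le_of_mul_norm_le {x y z : H} {δ r : ℝ} (hδ : 0 < δ) (hr : 0 ≤ r)
    (h : δ * ‖x‖ ≤ r * ‖y‖) :
    -(2 * ⟪x, z⟫) ≤ r / δ * (‖y‖ ^ 2 + ‖z‖ ^ 2) := by
  have hx : ‖x‖ ≤ r / δ * ‖y‖ := by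
    rw [div_mul_eq_mul_div, le_div_iff₀ hδ]
    linarith
  calc -(2 * ⟪x, z⟫) ≤ 2 * (‖x‖ * ‖z‖) := by
        nlinarith [abs_le.mp (abs_real_inner_le_norm x z)]
    _ ≤ 2 * (r / δ * ‖y‖ * ‖z‖) := by gcongr
    _ = r / δ * (2 * ‖y‖ * ‖z‖) := by ring
    _ ≤ r / δ * (‖y‖ ^ 2 + ‖z‖ ^ 2) := by
        gcongr
        exact two_mul_le_add_sq ‖y‖ ‖z‖

end

theorem stmt14_general {H : Type*} [NormedAddCommGroup H] [InnerProductSpace ℝ H]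
    (T : H → H) (S : H → Set H)
    (hTmono : ∀ a b : H, 0 ≤ ⟪T a - T b, a - b⟫)
    (hSmono : ∀ ⦃a b a' b' : H⦄, a' ∈ S a → b' ∈ S b → 0 ≤ ⟪a' - b', a - b⟫)
    (wsol : H) (hwsol : -T wsol ∈ S wsol)
    (wm w wp vhat : H) (σ δ' δ β r : ℝ)
    (hσ : σ ∈ Set.Ioo (0 : ℝ) 1) (hδ' : 0 < δ') (hδ : 0 < δ)
    (hr : 0 < r)
    (h1 : δ' / δ * r ≤ 1 / 2 - β)
    (h2 : δ * ‖T w - T wm‖ ≤ r * ‖w - wm‖)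
    (hinc : σ • vhat + (1 - σ) • w - δ • T w - (δ' * (1 - σ)) • (T w - T wm) - wp
      ∈ δ • S wp) :
    ‖wp - wsol‖ ^ 2 + 2 * δ * ⟪T wp - T w, wsol - wp⟫ + (1 / 2) * ‖wp - w‖ ^ 2 ≤
      (1 - σ) * (‖w - wsol‖ ^ 2 + 2 * δ' * ⟪T w - T wm, wsol - w⟫
          + (1 / 2) * ‖w - wm‖ ^ 2)
        + σ * ‖vhat - wsol‖ ^ 2
        - (1 / 2 - σ - δ' / δ * r * (1 - σ)) * ‖wp - w‖ ^ 2
        - β * (1 - σ) * ‖w - wm‖ ^ 2 := by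
  obtain ⟨hσ0, hσ1⟩ := hσ
  obtain ⟨s, hs, hstep : δ • s = _⟩ := hinc
  have hmono : 0 ≤ 2 * ⟪δ • (s + T wp), wp - wsol⟫ := by
    rw [real_inner_smul_left]
    have := inner_add_sub_nonneg_of_neg_mem hTmono hSmono hs hwsol
    positivity
  have hexpand : 2 * ⟪δ • (s + T wp), wp - wsol⟫ =
      σ * (‖vhat - wsol‖ ^ 2 - ‖vhat - wp‖ ^ 2) + (1 - σ) * (‖w - wsol‖ ^ 2 - ‖wp - w‖ ^ 2)
        - ‖wp - wsol‖ ^ 2 - 2 * δ * ⟪T wp - T w, wsol - wp⟫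
        + 2 * δ' * (1 - σ) * ⟪T w - T wm, wsol - w⟫
        + δ' * (1 - σ) * -(2 * ⟪T w - T wm, wp - w⟫) := by
    rw [smul_add, hstep]
    simp only [← real_inner_self_eq_norm_sq, inner_add_left, inner_sub_left, inner_sub_right,
      real_inner_smul_right, real_inner_comm]
    ring
  have hcross : δ' * (1 - σ) * -(2 * ⟪T w - T wm, wp - w⟫) ≤
      δ' / δ * r * (1 - σ) * (‖w - wm‖ ^ 2 + ‖wp - w‖ ^ 2) :=
    calc _ ≤ δ' * (1 - σ) * (r / δ * (‖w - wm‖ ^ 2 + ‖wp - w‖ ^ 2)) :=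
          mul_le_mul_of_nonneg_left (neg_two_mul_inner_le_of_mul_norm_le hδ hr.le h2)
            (mul_nonneg hδ'.le (by linarith))
      _ = _ := by ring
  have hanchor : 0 ≤ σ * ‖vhat - wp‖ ^ 2 := by positivity
  have hslack : 0 ≤ (1 / 2 - β - δ' / δ * r) * ((1 - σ) * ‖w - wm‖ ^ 2) :=
    mul_nonneg (by linarith) (mul_nonneg (by linarith) (sq_nonneg _))
  linarith

/-- One-step descent estimate for the forward-reflected-anchored-backward
iteration (inequality (3.13)). -/
theorem stmt14 {H : Type*} [NormedAddCommGroup H] [InnerProductSpace ℝ H]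
    (T : H → H) (S : H → Set H)
    (hTmono : ∀ a b : H, 0 ≤ ⟪T a - T b, a - b⟫)
    (hSmono : ∀ ⦃a b a' b' : H⦄, a' ∈ S a → b' ∈ S b → 0 ≤ ⟪a' - b', a - b⟫)
    (wsol : H) (hwsol : -T wsol ∈ S wsol)
    (wm w wp vhat : H) (σ δ' δ β r : ℝ)
    (hσ : σ ∈ Set.Ioo (0 : ℝ) 1) (hδ' : 0 < δ') (hδ : 0 < δ)
    (hβ : β ∈ Set.Ioo (0 : ℝ) (1 / 4)) (hr : 0 < r)
    (h1 : δ' / δ * r ≤ 1 / 2 - β)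
    (h2 : δ * ‖T w - T wm‖ ≤ r * ‖w - wm‖)
    (hinc : σ • vhat + (1 - σ) • w - δ • T w - (δ' * (1 - σ)) • (T w - T wm) - wp
      ∈ δ • S wp) :
    ‖wp - wsol‖ ^ 2 + 2 * δ * ⟪T wp - T w, wsol - wp⟫ + (1 / 2) * ‖wp - w‖ ^ 2 ≤
      (1 - σ) * (‖w - wsol‖ ^ 2 + 2 * δ' * ⟪T w - T wm, wsol - w⟫
          + (1 / 2) * ‖w - wm‖ ^ 2)
        + σ * ‖vhat - wsol‖ ^ 2
        - (1 / 2 - σ - δ' / δ * r * (1 - σ)) * ‖wp - w‖ ^ 2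
        - β * (1 - σ) * ‖w - wm‖ ^ 2 :=
  stmt14_general T S hTmono hSmono wsol hwsol wm w wp vhat σ δ' δ β r hσ hδ' hδ hr h1 h2 hinc
end

section
/- Let H be a real Hilbert space, let T : H → H be monotone and L-Lipschitz continuous, and let S : H → Set H be maximal monotone. Let {w_n}, {a_n} be sequences in H, {σ_n} a sequence in (0,1), and {δ_n} a sequence of positive reals such that for all n ≥ 1 the inclusion a_n − δ_n T w_n − δ_{n−1}(1−σ_n)(T w_n − T w_{n−1}) − w_{n+1} ∈ δ_n • S(w_{n+1}) holds. Suppose δ_n → δ̄ for some δ̄ > 0, σ_n → 0, ‖w_{n+1} − w_n‖ → 0, ‖a_n − w_{n+1}‖ → 0, and some subsequence {w_{n_j}} converges weakly to w* ∈ H. Then 0 ∈ (S+T)(w*), i.e. −T w* ∈ S w*. -/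
/-!
The iterates provide `s n ∈ S (w (n + 1))` whose residual `s n + T (w (n + 1))` tends to `0`
in norm, while `w (φ j + 1) ⇀ w*`. The graph of the maximal monotone operator `S + T` is closed
for weak × strong convergence, so `0 ∈ (S + T) w*`.

Maximality of `S + T` for Lipschitz `T` comes from the resolvent of `S`, i.e. from Minty's
theorem. That in turn is proved by minimizing `F_S + ½ ‖·‖²` over `H × H`, where `F_S` is the
Fitzpatrick function: strong convexity gives a minimizer `(z, z')`, and its first-order condition,
combined with `F_S ≥ ⟪·, ·⟫` on `H × H`, yields `z' = -z` and `-z ∈ S z`.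
-/

open Filter Topology
open scoped RealInnerProductSpace Pointwise
open scoped NNReal

section Hilbert

variable {H : Type*} [NormedAddCommGroup H] [InnerProductSpace ℝ H]

structure IsMaximalMonotone (S : H → Set H) : Prop where
  monotone : ∀ ⦃a b a' b' : H⦄, a' ∈ S a → b' ∈ S b → 0 ≤ ⟪a' - b', a - b⟫
  maximal : ∀ a a' : H, (∀ b b', b' ∈ S b → 0 ≤ ⟪a' - b', a - b⟫) → a' ∈ S a

def WeakTendsto (u : ℕ → H) (x : H) : Prop :=
  ∀ h : H, Tendsto (fun j => ⟪u j, h⟫) atTop (𝓝 ⟪x, h⟫)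

/-- `FitzpatrickLE S x y r` says `F_S (x, y) ≤ r` for the Fitzpatrick function
`F_S (x, y) = sup {⟪x, b'⟫ + ⟪b, y⟫ - ⟪b, b'⟫ | b' ∈ S b}`, which may be infinite. -/
def FitzpatrickLE (S : H → Set H) (x y : H) (r : ℝ) : Prop :=
  ∀ b b', b' ∈ S b → ⟪x, b'⟫ + ⟪b, y⟫ - ⟪b, b'⟫ ≤ r

/-- The values bounding `F_S + ½ ‖·‖²` somewhere on `H × H`. -/
def fitzpatrickLevels (S : H → Set H) : Set ℝ :=
  {r | ∃ x y, FitzpatrickLE S x y (r - (‖x‖ ^ 2 + ‖y‖ ^ 2) / 2)}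

theorem norm_one_sub_smul_add_smul_sq (t : ℝ) (u v : H) :
    ‖(1 - t) • u + t • v‖ ^ 2 = (1 - t) * ‖u‖ ^ 2 + t * ‖v‖ ^ 2 - t * (1 - t) * ‖u - v‖ ^ 2 := by
  rw [norm_add_sq_real, norm_sub_sq_real, norm_smul, norm_smul, real_inner_smul_left,
    real_inner_smul_right, Real.norm_eq_abs, Real.norm_eq_abs, mul_pow, mul_pow, sq_abs, sq_abs]
  ring

theorem cauchySeq_of_dist_sq_le {α : Type*} [PseudoMetricSpace α] {u : ℕ → α} {ε : ℕ → ℝ}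
    (hε : Tendsto ε atTop (𝓝 0)) (hu : ∀ p q, dist (u p) (u q) ^ 2 ≤ ε p + ε q) :
    CauchySeq u := by
  rw [Metric.cauchySeq_iff']
  intro η hη
  obtain ⟨N, hN⟩ := eventually_atTop.1 (hε.eventually (gt_mem_nhds (by positivity : 0 < η ^ 2 / 2)))
  refine ⟨N, fun n hn => ?_⟩
  rw [← pow_lt_pow_iff_left₀ dist_nonneg hη.le two_ne_zero]
  linarith [hu n N, hN n hn, hN N le_rfl]

namespace FitzpatrickLE

variable {S : H → Set H} {x y x' y' : H} {r r' : ℝ}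

theorem mono (h : FitzpatrickLE S x y r) (hr : r ≤ r') : FitzpatrickLE S x y r' :=
  fun b b' hb => (h b b' hb).trans hr

theorem convex_comb (h : FitzpatrickLE S x y r) (h' : FitzpatrickLE S x' y' r') {t : ℝ}
    (ht₀ : 0 ≤ t) (ht₁ : t ≤ 1) :
    FitzpatrickLE S ((1 - t) • x + t • x') ((1 - t) • y + t • y') ((1 - t) * r + t * r') := by
  intro b b' hb
  have hsplit : ⟪(1 - t) • x + t • x', b'⟫ + ⟪b, (1 - t) • y + t • y'⟫ - ⟪b, b'⟫
      = (1 - t) * (⟪x, b'⟫ + ⟪b, y⟫ - ⟪b, b'⟫) + t * (⟪x', b'⟫ + ⟪b, y'⟫ - ⟪b, b'⟫) := by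
    simp only [inner_add_left, inner_add_right, real_inner_smul_left, real_inner_smul_right]
    ring
  rw [hsplit]
  have := mul_le_mul_of_nonneg_left (h b b' hb) (sub_nonneg.2 ht₁)
  have := mul_le_mul_of_nonneg_left (h' b b' hb) ht₀
  linarith

/-- Strong convexity of `F_S + ½ ‖·‖²`. -/
theorem mem_fitzpatrickLevels_convex_comb (h : FitzpatrickLE S x y (r - (‖x‖ ^ 2 + ‖y‖ ^ 2) / 2))
    (h' : FitzpatrickLE S x' y' (r' - (‖x'‖ ^ 2 + ‖y'‖ ^ 2) / 2)) {t : ℝ} (ht₀ : 0 ≤ t)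
    (ht₁ : t ≤ 1) :
    (1 - t) * r + t * r' - t * (1 - t) * (‖x - x'‖ ^ 2 + ‖y - y'‖ ^ 2) / 2
      ∈ fitzpatrickLevels S := by
  refine ⟨_, _, (h.convex_comb h' ht₀ ht₁).mono (le_of_eq ?_)⟩
  rw [norm_one_sub_smul_add_smul_sq, norm_one_sub_smul_add_smul_sq]
  ring

theorem of_tendsto {u v : ℕ → H} {s : ℕ → ℝ} (h : ∀ n, FitzpatrickLE S (u n) (v n) (s n))
    (hu : Tendsto u atTop (𝓝 x)) (hv : Tendsto v atTop (𝓝 y)) (hs : Tendsto s atTop (𝓝 r)) :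
    FitzpatrickLE S x y r := fun b b' hb =>
  le_of_tendsto_of_tendsto'
    (((hu.inner tendsto_const_nhds).add (tendsto_const_nhds.inner hv)).sub tendsto_const_nhds) hs
    fun n => h n b b' hb

end FitzpatrickLE

namespace IsMaximalMonotone

variable {S : H → Set H}

theorem exists_mem (hS : IsMaximalMonotone S) : ∃ b b', b' ∈ S b := by
  by_contra! h
  exact h 0 0 (hS.maximal 0 0 fun b b' hb => absurd hb (h b b'))

theorem inner_le_of_fitzpatrickLE (hS : IsMaximalMonotone S) {x y : H} {r : ℝ}
    (h : FitzpatrickLE S x y r) : ⟪x, y⟫ ≤ r := by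
  by_contra! hlt
  have hyx : y ∈ S x := hS.maximal x y fun b b' hb => by
    have := h b b' hb
    simp only [inner_sub_left, inner_sub_right, real_inner_comm] at this ⊢
    linarith
  have := h x y hyx
  linarith

theorem fitzpatrickLE_of_mem (hS : IsMaximalMonotone S) {b b' : H} (hb : b' ∈ S b) :
    FitzpatrickLE S b b' ⟪b, b'⟫ := fun c c' hc => by
  have := hS.monotone hb hc
  simp only [inner_sub_left, inner_sub_right, real_inner_comm] at this ⊢
  linarith

theorem fitzpatrickLevels_nonempty (hS : IsMaximalMonotone S) :
    (fitzpatrickLevels S).Nonempty := by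
  obtain ⟨b, b', hb⟩ := hS.exists_mem
  exact ⟨_, b, b', (hS.fitzpatrickLE_of_mem hb).mono (le_of_eq (add_sub_cancel_right _ _).symm)⟩

theorem fitzpatrickLevels_bddBelow (hS : IsMaximalMonotone S) : BddBelow (fitzpatrickLevels S) := by
  refine ⟨0, fun r ⟨x, y, hxy⟩ => ?_⟩
  have := hS.inner_le_of_fitzpatrickLE hxy
  nlinarith [norm_add_sq_real x y, sq_nonneg ‖x + y‖]

/-- The infimum of `F_S + ½ ‖·‖²` is attained: minimizing sequences are Cauchy by strong
convexity. -/
theorem exists_fitzpatrickLE_sInf [CompleteSpace H] (hS : IsMaximalMonotone S) :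
    ∃ z z', FitzpatrickLE S z z' (sInf (fitzpatrickLevels S) - (‖z‖ ^ 2 + ‖z'‖ ^ 2) / 2) := by
  set m := sInf (fitzpatrickLevels S)
  have hm : ∀ r ∈ fitzpatrickLevels S, m ≤ r := fun r hr =>
    csInf_le hS.fitzpatrickLevels_bddBelow hr
  have hε := tendsto_one_div_add_atTop_nhds_zero_nat (𝕜 := ℝ)
  have happrox : ∀ n : ℕ, ∃ x y,
      FitzpatrickLE S x y (m + 1 / (n + 1) - (‖x‖ ^ 2 + ‖y‖ ^ 2) / 2) := by
    intro n
    obtain ⟨r, ⟨x, y, hxy⟩, hr⟩ := exists_lt_of_csInf_lt hS.fitzpatrickLevels_nonempty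
      (lt_add_of_pos_right m (by positivity : (0 : ℝ) < 1 / (n + 1)))
    exact ⟨x, y, hxy.mono (by linarith)⟩
  choose x y hxy using happrox
  have hdist : ∀ p q, ‖x p - x q‖ ^ 2 + ‖y p - y q‖ ^ 2
      ≤ 4 * (1 / ((p : ℝ) + 1)) + 4 * (1 / ((q : ℝ) + 1)) := by
    intro p q
    have := hm _ ((hxy p).mem_fitzpatrickLevels_convex_comb (hxy q) (t := 1 / 2)
      (by norm_num) (by norm_num))
    linarith
  have hε4 : Tendsto (fun n : ℕ => 4 * (1 / ((n : ℝ) + 1))) atTop (𝓝 0) := by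
    simpa using hε.const_mul 4
  obtain ⟨z, hz⟩ := cauchySeq_tendsto_of_complete <|
    cauchySeq_of_dist_sq_le (u := x) hε4 fun p q => by
      rw [dist_eq_norm]; nlinarith [hdist p q, sq_nonneg ‖y p - y q‖]
  obtain ⟨z', hz'⟩ := cauchySeq_tendsto_of_complete <|
    cauchySeq_of_dist_sq_le (u := y) hε4 fun p q => by
      rw [dist_eq_norm]; nlinarith [hdist p q, sq_nonneg ‖x p - x q‖]
  refine ⟨z, z', FitzpatrickLE.of_tendsto hxy hz hz' ?_⟩
  simpa using (hε.const_add m).sub (((hz.norm.pow 2).add (hz'.norm.pow 2)).div_const 2)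

/-- First-order condition at the minimizer, obtained by moving it towards a graph point. -/
theorem sq_norm_add_le_inner [CompleteSpace H] (hS : IsMaximalMonotone S) {z z' : H}
    (hz : FitzpatrickLE S z z' (sInf (fitzpatrickLevels S) - (‖z‖ ^ 2 + ‖z'‖ ^ 2) / 2))
    {b b' : H} (hb : b' ∈ S b) : ‖z + z'‖ ^ 2 ≤ ⟪-z - b', -z' - b⟫ := by
  set m := sInf (fitzpatrickLevels S)
  set ab := ⟪b, b'⟫ + (‖b‖ ^ 2 + ‖b'‖ ^ 2) / 2
  set D := ‖z - b‖ ^ 2 + ‖z' - b'‖ ^ 2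
  have hgraph : FitzpatrickLE S b b' (ab - (‖b‖ ^ 2 + ‖b'‖ ^ 2) / 2) :=
    (hS.fitzpatrickLE_of_mem hb).mono (le_of_eq (add_sub_cancel_right _ _).symm)
  have hsegment : ∀ t ∈ Set.Ioo (0 : ℝ) 1, m ≤ ab - (1 - t) * D / 2 := by
    intro t ⟨ht₀, ht₁⟩
    have := csInf_le hS.fitzpatrickLevels_bddBelow
      (hz.mem_fitzpatrickLevels_convex_comb hgraph ht₀.le ht₁.le)
    refine le_of_mul_le_mul_left ?_ ht₀
    linarith
  have hcont : Continuous fun t : ℝ => ab - (1 - t) * D / 2 := by fun_prop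
  have hmin : m ≤ ab - (1 - 0) * D / 2 :=
    ge_of_tendsto (hcont.continuousWithinAt (s := Set.Ioi 0) (x := 0))
      (eventually_of_mem (Ioo_mem_nhdsGT one_pos) hsegment)
  have hlow := hS.inner_le_of_fitzpatrickLE hz
  simp only [inner_sub_left, inner_sub_right, inner_neg_left, inner_neg_right]
  rw [norm_add_sq_real]
  simp only [D, ab, norm_sub_sq_real, sub_zero, one_mul] at hmin
  linarith [real_inner_comm z' b', real_inner_comm b b']

theorem exists_neg_mem [CompleteSpace H] (hS : IsMaximalMonotone S) : ∃ y, -y ∈ S y := by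
  obtain ⟨z, z', hz⟩ := hS.exists_fitzpatrickLE_sInf
  have hmem : -z ∈ S (-z') := hS.maximal _ _ fun b b' hb =>
    (sq_nonneg _).trans (hS.sq_norm_add_le_inner hz hb)
  have hsum : z + z' = 0 := by
    simpa using hS.sq_norm_add_le_inner hz hmem
  refine ⟨z, ?_⟩
  rwa [eq_neg_of_add_eq_zero_right hsum, neg_neg] at hmem

theorem smul (hS : IsMaximalMonotone S) {μ : ℝ} (hμ : 0 < μ) :
    IsMaximalMonotone fun x => μ • S x where
  monotone := by
    rintro a b _ _ ⟨s, hs, rfl⟩ ⟨s', hs', rfl⟩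
    rw [← smul_sub, real_inner_smul_left]
    exact mul_nonneg hμ.le (hS.monotone hs hs')
  maximal a a' h := by
    rw [Set.mem_smul_set_iff_inv_smul_mem₀ hμ.ne']
    refine hS.maximal _ _ fun c s hs => ?_
    have := h c (μ • s) (Set.smul_mem_smul_set hs)
    rw [← inv_smul_smul₀ hμ.ne' s, ← smul_sub, real_inner_smul_left]
    positivity

theorem comp_add_left (hS : IsMaximalMonotone S) (x₀ : H) :
    IsMaximalMonotone fun x => S (x₀ + x) where
  monotone a b a' b' ha hb := by
    simpa using hS.monotone ha hb
  maximal a a' h := hS.maximal _ _ fun c c' hc => by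
    simpa [sub_sub_eq_add_sub, add_comm] using h (c - x₀) c' (by rwa [add_sub_cancel])

/-- Minty's theorem: the resolvent `(I + μ S)⁻¹` is everywhere defined. -/
theorem exists_sub_mem_smul [CompleteSpace H] (hS : IsMaximalMonotone S) {μ : ℝ} (hμ : 0 < μ)
    (x : H) : ∃ y, x - y ∈ μ • S y := by
  obtain ⟨v, hv⟩ := ((hS.comp_add_left x).smul hμ).exists_neg_mem
  exact ⟨x + v, by rwa [sub_add_cancel_left]⟩

theorem add_lipschitz [CompleteSpace H] (hS : IsMaximalMonotone S) {T : H → H} {K : ℝ≥0}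
    (hTmono : ∀ a b, 0 ≤ ⟪T a - T b, a - b⟫) (hT : LipschitzWith K T) :
    IsMaximalMonotone fun x => T x +ᵥ S x where
  monotone a b a' b' ha hb := by
    obtain ⟨s, hs, rfl⟩ := Set.mem_vadd_set.1 ha
    obtain ⟨s', hs', rfl⟩ := Set.mem_vadd_set.1 hb
    have hsplit : (T a + s) - (T b + s') = (T a - T b) + (s - s') := by abel
    rw [vadd_eq_add, vadd_eq_add, hsplit, inner_add_left]
    exact add_nonneg (hTmono a b) (hS.monotone hs hs')
  maximal x u h := by
    set μ : ℝ := (K + 1)⁻¹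
    have hμ : 0 < μ := by positivity
    -- Test the hypothesis at the resolvent point `y` of `x + μ (u - T x)`: as `μ K < 1`, this
    -- forces `y = x`.
    obtain ⟨y, hy⟩ := hS.exists_sub_mem_smul hμ (x + μ • (u - T x))
    obtain ⟨s, hs, hys⟩ := Set.mem_smul_set.1 hy
    have htest := h y (T y + s) (Set.vadd_mem_vadd_set hs)
    have hres : μ • (u - (T y + s)) = μ • (T x - T y) - (x - y) := by
      rw [smul_sub, smul_add, hys]
      simp only [smul_sub]
      abel
    have hlip : ⟪T x - T y, x - y⟫ ≤ K * ‖x - y‖ ^ 2 :=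
      (real_inner_le_norm _ _).trans (by nlinarith [hT.norm_sub_le x y, norm_nonneg (x - y)])
    have hxy : ‖x - y‖ ^ 2 ≤ 0 := by
      have h1 : 0 ≤ μ * ⟪u - (T y + s), x - y⟫ := mul_nonneg hμ.le htest
      rw [← real_inner_smul_left, hres, inner_sub_left, real_inner_smul_left,
        real_inner_self_eq_norm_sq] at h1
      have hμK : μ * K = 1 - μ := by simp only [μ]; field_simp; ring
      nlinarith [mul_le_mul_of_nonneg_left hlip hμ.le]
    obtain rfl : x = y := sub_eq_zero.1 (norm_eq_zero.1 (by nlinarith [norm_nonneg (x - y)]))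
    refine ⟨s, hs, ?_⟩
    have : μ • s = μ • (u - T x) := by rw [hys, add_sub_cancel_left]
    simp only [smul_right_injective H hμ.ne' this, vadd_eq_add, add_sub_cancel]

end IsMaximalMonotone

namespace WeakTendsto

variable {u v : ℕ → H} {x : H}

theorem exists_norm_le [CompleteSpace H] (hu : WeakTendsto u x) : ∃ C, ∀ j, ‖u j‖ ≤ C := by
  have hpointwise : ∀ h : H, ∃ C, ∀ j, ‖innerSL ℝ (u j) h‖ ≤ C := fun h => by
    obtain ⟨C, hC⟩ := (hu h).norm.bddAbove_range
    exact ⟨C, fun j => hC (Set.mem_range_self j)⟩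
  obtain ⟨C, hC⟩ := banach_steinhaus hpointwise
  exact ⟨C, fun j => by simpa only [innerSL_apply_norm] using hC j⟩

theorem of_tendsto_sub (hu : WeakTendsto u x) (hvu : Tendsto (fun j => v j - u j) atTop (𝓝 0)) :
    WeakTendsto v x := fun h => by
  simpa [inner_sub_left] using (hu h).add (hvu.inner (tendsto_const_nhds (x := h)))

theorem tendsto_inner [CompleteSpace H] (hu : WeakTendsto u x) {y : H}
    (hv : Tendsto v atTop (𝓝 y)) : Tendsto (fun j => ⟪v j, u j⟫) atTop (𝓝 ⟪y, x⟫) := by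
  obtain ⟨C, hC⟩ := hu.exists_norm_le
  have hsmall : Tendsto (fun j => ⟪v j - y, u j⟫) atTop (𝓝 0) := by
    refine squeeze_zero_norm (fun j => ?_)
      (by simpa using (tendsto_sub_nhds_zero_iff.2 hv).norm.mul_const C)
    rw [Real.norm_eq_abs]
    exact (abs_real_inner_le_norm _ _).trans
      (mul_le_mul_of_nonneg_left (hC j) (norm_nonneg _))
  simpa [inner_sub_left, real_inner_comm] using hsmall.add (hu y)

end WeakTendsto

theorem IsMaximalMonotone.mem_of_weakTendsto [CompleteSpace H] {S : H → Set H}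
    (hS : IsMaximalMonotone S) {x u : ℕ → H} {x₀ u₀ : H} (hx : WeakTendsto x x₀)
    (hu : Tendsto u atTop (𝓝 u₀)) (hmem : ∀ᶠ j in atTop, u j ∈ S (x j)) : u₀ ∈ S x₀ :=
  hS.maximal _ _ fun b b' hb => by
    have hlim : Tendsto (fun j => ⟪u j - b', x j⟫ - ⟪u j - b', b⟫) atTop
        (𝓝 (⟪u₀ - b', x₀⟫ - ⟪u₀ - b', b⟫)) :=
      (hx.tendsto_inner (hu.sub_const b')).sub ((hu.sub_const b').inner tendsto_const_nhds)
    rw [inner_sub_right]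
    exact ge_of_tendsto hlim (hmem.mono fun j hj => by
      rw [← inner_sub_right]; exact hS.monotone hj hb)

theorem tendsto_forwardReflectedBackward_residual {T : H → H} {K : ℝ≥0} (hT : LipschitzWith K T)
    {w a s : ℕ → H} {σ δ : ℕ → ℝ} {σbar δbar : ℝ} (hδbar : δbar ≠ 0)
    (hδ : Tendsto δ atTop (𝓝 δbar)) (hσ : Tendsto σ atTop (𝓝 σbar))
    (hw : Tendsto (fun n => ‖w (n + 1) - w n‖) atTop (𝓝 0))
    (ha : Tendsto (fun n => ‖a n - w (n + 1)‖) atTop (𝓝 0))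
    (hs : ∀ n, 1 ≤ n → δ n • s n =
      a n - δ n • T (w n) - (δ (n - 1) * (1 - σ n)) • (T (w n) - T (w (n - 1))) - w (n + 1)) :
    Tendsto (fun n => s n + T (w (n + 1))) atTop (𝓝 0) := by
  have hTw : Tendsto (fun n => T (w (n + 1)) - T (w n)) atTop (𝓝 0) :=
    squeeze_zero_norm (fun n => hT.norm_sub_le _ _) (by simpa using hw.const_mul (K : ℝ))
  have hTw' : Tendsto (fun n => T (w n) - T (w (n - 1))) atTop (𝓝 0) :=
    (hTw.comp (tendsto_sub_atTop_nat 1)).congr' <|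
      (eventually_ge_atTop 1).mono fun n hn => by simp [Nat.sub_add_cancel hn]
  have hrhs : Tendsto (fun n => (a n - w (n + 1)) + δ n • (T (w (n + 1)) - T (w n))
      - (δ (n - 1) * (1 - σ n)) • (T (w n) - T (w (n - 1)))) atTop (𝓝 0) := by
    simpa using ((tendsto_zero_iff_norm_tendsto_zero.2 ha).add (hδ.smul hTw)).sub
      (((hδ.comp (tendsto_sub_atTop_nat 1)).mul (tendsto_const_nhds.sub hσ)).smul hTw')
  have hlim := (hδ.inv₀ hδbar).smul hrhs
  rw [smul_zero] at hlim
  refine hlim.congr' ?_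
  filter_upwards [eventually_ge_atTop 1, hδ.eventually_ne hδbar] with n hn hδn
  rw [eq_comm, eq_inv_smul_iff₀ hδn, smul_add, hs n hn]
  simp only [smul_sub]
  abel

end Hilbert

theorem stmt15_general {H : Type*} [NormedAddCommGroup H] [InnerProductSpace ℝ H] [CompleteSpace H]
    (T : H → H) (L : ℝ)
    (hTmono : ∀ a b : H, 0 ≤ ⟪T a - T b, a - b⟫)
    (hTlip : ∀ a b : H, ‖T a - T b‖ ≤ L * ‖a - b‖)
    (S : H → Set H)
    (hSmono : ∀ ⦃a b a' b' : H⦄, a' ∈ S a → b' ∈ S b → 0 ≤ ⟪a' - b', a - b⟫)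
    (hSmax : ∀ a a' : H, (∀ b b', b' ∈ S b → 0 ≤ ⟪a' - b', a - b⟫) → a' ∈ S a)
    (w a : ℕ → H) (σ δ : ℕ → ℝ)
    (hinc : ∀ n, 1 ≤ n →
      a n - δ n • T (w n) - (δ (n - 1) * (1 - σ n)) • (T (w n) - T (w (n - 1))) - w (n + 1)
        ∈ δ n • S (w (n + 1)))
    (δbar : ℝ) (hδbar : 0 < δbar) (hδlim : Tendsto δ atTop (𝓝 δbar))
    (hσ0 : Tendsto σ atTop (𝓝 0))
    (hwdiff : Tendsto (fun n => ‖w (n + 1) - w n‖) atTop (𝓝 0))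
    (hawdiff : Tendsto (fun n => ‖a n - w (n + 1)‖) atTop (𝓝 0))
    (φ : ℕ → ℕ) (hφ : StrictMono φ) (wstar : H)
    (hweak : ∀ h : H, Tendsto (fun j => ⟪w (φ j), h⟫) atTop (𝓝 ⟪wstar, h⟫)) :
    -T wstar ∈ S wstar := by
  have hT : LipschitzWith L.toNNReal T :=
    .of_dist_le' fun a b => by simpa only [dist_eq_norm] using hTlip a b
  have hST : IsMaximalMonotone fun x => T x +ᵥ S x :=
    IsMaximalMonotone.add_lipschitz ⟨hSmono, hSmax⟩ hTmono hT
  simp only [Set.mem_smul_set] at hinc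
  choose! s hs hδs using hinc
  have hres := tendsto_forwardReflectedBackward_residual hT hδbar.ne' hδlim hσ0 hwdiff hawdiff hδs
  have hw : WeakTendsto (fun j => w (φ j + 1)) wstar :=
    WeakTendsto.of_tendsto_sub hweak (tendsto_zero_iff_norm_tendsto_zero.2
      (hwdiff.comp hφ.tendsto_atTop))
  obtain ⟨s₀, hs₀, hsum⟩ := hST.mem_of_weakTendsto hw (hres.comp hφ.tendsto_atTop) <|
    (eventually_ge_atTop 1).mono fun j hj =>
      Set.mem_vadd_set.2 ⟨_, hs _ (hj.trans hφ.le_apply), add_comm _ _⟩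
  simp only [vadd_eq_add] at hsum
  rwa [← eq_neg_of_add_eq_zero_right hsum]

/-- A weak subsequential limit of the iterates of the
forward-reflected-(anchored-)backward scheme is a zero of `S + T`. -/
theorem stmt15 {H : Type*} [NormedAddCommGroup H] [InnerProductSpace ℝ H] [CompleteSpace H]
    (T : H → H) (L : ℝ) (hL : 0 < L)
    (hTmono : ∀ a b : H, 0 ≤ ⟪T a - T b, a - b⟫)
    (hTlip : ∀ a b : H, ‖T a - T b‖ ≤ L * ‖a - b‖)
    (S : H → Set H)
    (hSmono : ∀ ⦃a b a' b' : H⦄, a' ∈ S a → b' ∈ S b → 0 ≤ ⟪a' - b', a - b⟫)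
    (hSmax : ∀ a a' : H, (∀ b b', b' ∈ S b → 0 ≤ ⟪a' - b', a - b⟫) → a' ∈ S a)
    (w a : ℕ → H) (σ δ : ℕ → ℝ)
    (hσ : ∀ n, σ n ∈ Set.Ioo (0 : ℝ) 1) (hδpos : ∀ n, 0 < δ n)
    (hinc : ∀ n, 1 ≤ n →
      a n - δ n • T (w n) - (δ (n - 1) * (1 - σ n)) • (T (w n) - T (w (n - 1))) - w (n + 1)
        ∈ δ n • S (w (n + 1)))
    (δbar : ℝ) (hδbar : 0 < δbar) (hδlim : Tendsto δ atTop (𝓝 δbar))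
    (hσ0 : Tendsto σ atTop (𝓝 0))
    (hwdiff : Tendsto (fun n => ‖w (n + 1) - w n‖) atTop (𝓝 0))
    (hawdiff : Tendsto (fun n => ‖a n - w (n + 1)‖) atTop (𝓝 0))
    (φ : ℕ → ℕ) (hφ : StrictMono φ) (wstar : H)
    (hweak : ∀ h : H, Tendsto (fun j => ⟪w (φ j), h⟫) atTop (𝓝 ⟪wstar, h⟫)) :
    -T wstar ∈ S wstar :=
  stmt15_general T L hTmono hTlip S hSmono hSmax w a σ δ hinc δbar hδbar hδlim hσ0 hwdiff hawdiff φ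
    hφ wstar hweak
end
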